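/- arXiv:1304.2132 — 2 statements merged into one kernel-verified Lean document; each statement's English description precedes it below -/
import Mathlib

section
/- Let C_n be the cycle graph on n > 2 vertices with n odd, and Δ(s) = s²(D − I) − sA + I its deformed Laplacian. For every real s with s ≠ 1, the matrix Δ(s) is positive definite (equivalently, the system ẋ = −Δ(s)x is asymptotically stable). -/
open Matrix Filter

/-- The degree matrix of a graph given by its adjacency matrix: the diagonal matrix of
row sums of `A`. -/
noncomputable def degMat {V : Type} [Fintype V] [DecidableEq V] (A : Matrix V V ℝ) :
    Matrix V V ℝ :=
  Matrix.diagonal fun i => ∑ j, A i j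

/-- The deformed Laplacian `Δ(s) = s²(D − I) − sA + I`. -/
noncomputable def defLap {V : Type} [Fintype V] [DecidableEq V] (A : Matrix V V ℝ) (s : ℝ) :
    Matrix V V ℝ :=
  s ^ 2 • (degMat A - 1) - s • A + 1

/-- Adjacency matrix of the cycle graph `C_n` on vertices `0,…,n−1` (mod `n`):
`i` and `j` are adjacent iff `i − j ≡ ±1 (mod n)`. -/
noncomputable def cycAdj (n : ℕ) : Matrix (Fin n) (Fin n) ℝ :=
  fun i j => if ((i : ℕ) + 1) % n = (j : ℕ) ∨ ((j : ℕ) + 1) % n = (i : ℕ) then 1 else 0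

/-!
Writing `P` for the permutation matrix of the rotation `i ↦ i + 1`, the adjacency matrix of
`C_n` is `Pᵀ + P` and every degree is `2`, so `Δ(s) = (s • 1 - P)ᵀ (s • 1 - P)`. This Gram matrix
is positive definite as soon as `s • 1 - P` is injective, and `(s • 1 - P) x = 0` means
`x (i + 1) = s * x i`; going once around the cycle gives `x = sⁿ • x`, which forces `x = 0`
because `sⁿ ≠ 1` for odd `n` and `s ≠ 1`.
-/

open Equiv

lemma Equiv.Perm.permMatrix_apply {V R : Type*} [DecidableEq V] [Zero R] [One R] (σ : Perm V)
    (i j : V) : σ.permMatrix R i j = if σ i = j then 1 else 0 := by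
  simp [PEquiv.toMatrix_apply]

section PermutationMatrix

variable {V : Type} [Fintype V] [DecidableEq V]

lemma degMat_add (A B : Matrix V V ℝ) : degMat (A + B) = degMat A + degMat B := by
  simp only [degMat, Matrix.add_apply, Finset.sum_add_distrib, diagonal_add]

lemma degMat_permMatrix (σ : Perm V) : degMat (σ.permMatrix ℝ) = 1 := by
  simp [degMat]

lemma defLap_transpose_add_permMatrix (σ : Perm V) (s : ℝ) :
    defLap ((σ.permMatrix ℝ)ᵀ + σ.permMatrix ℝ) s
      = (s • 1 - σ.permMatrix ℝ)ᴴ * (s • 1 - σ.permMatrix ℝ) := by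
  have hdeg : degMat ((σ.permMatrix ℝ)ᵀ + σ.permMatrix ℝ) = (2 : ℝ) • 1 := by
    rw [degMat_add, transpose_permMatrix, degMat_permMatrix, degMat_permMatrix, two_smul]
  have horth : (σ.permMatrix ℝ)ᵀ * σ.permMatrix ℝ = 1 := by
    rw [transpose_permMatrix, ← permMatrix_mul, mul_inv_cancel, permMatrix_one]
  rw [conjTranspose_eq_transpose_of_trivial, defLap, hdeg, transpose_sub, transpose_smul,
    transpose_one, sub_mul, mul_sub, mul_sub, horth]
  simp only [Matrix.smul_mul, Matrix.mul_smul, one_mul, mul_one, smul_smul]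
  module

lemma mulVec_injective_smul_one_sub_permMatrix {σ : Perm V} {k : ℕ} (hσ : σ ^ k = 1)
    {s : ℝ} (hs : s ^ k ≠ 1) : Function.Injective (s • 1 - σ.permMatrix ℝ).mulVec := by
  rw [← coe_mulVecLin, injective_iff_map_eq_zero]
  intro x hx
  rw [coe_mulVecLin, sub_mulVec, smul_mulVec, one_mulVec, permMatrix_mulVec] at hx
  have hstep : ∀ i, x (σ i) = s * x i := by
    intro i
    have := congrFun hx i
    simp only [Pi.sub_apply, Pi.smul_apply, smul_eq_mul, Function.comp_apply,
      Pi.zero_apply] at this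
    linarith
  have hiter : ∀ m i, x ((σ ^ m) i) = s ^ m * x i := by
    intro m
    induction m with
    | zero => simp
    | succ m ih => intro i; rw [pow_succ', Perm.mul_apply, hstep, ih, pow_succ', mul_assoc]
  funext i
  have hfix : (s ^ k - 1) * x i = 0 := by
    have := hiter k i
    rw [hσ, Perm.one_apply] at this
    linarith
  exact (mul_eq_zero.mp hfix).resolve_left (sub_ne_zero.mpr hs)

end PermutationMatrix

lemma finRotate_pow_self {n : ℕ} (hn : 2 ≤ n) : finRotate n ^ n = 1 := by
  have horder := (isCycle_finRotate_of_le hn).orderOf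
  rw [support_finRotate_of_le hn, Finset.card_univ, Fintype.card_fin] at horder
  simpa [horder] using pow_orderOf_eq_one (finRotate n)

lemma val_finRotate {n : ℕ} (i : Fin n) :
    (finRotate n i : ℕ) = if (i : ℕ) + 1 = n then (0 : ℕ) else i + 1 := by
  obtain ⟨m, rfl⟩ : ∃ m, n = m + 1 := ⟨n - 1, by have := i.pos; omega⟩
  rw [coe_finRotate]
  simp [Fin.ext_iff]

lemma cycAdj_eq_transpose_add_permMatrix {n : ℕ} (hn : 2 < n) :
    cycAdj n = ((finRotate n).permMatrix ℝ)ᵀ + (finRotate n).permMatrix ℝ := by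
  have hmod : ∀ a : Fin n, ((a : ℕ) + 1) % n = if (a : ℕ) + 1 = n then (0 : ℕ) else a + 1 := by
    intro a
    split_ifs with h
    · simp [h]
    · exact Nat.mod_eq_of_lt (by omega)
  ext i j
  simp only [cycAdj, Matrix.add_apply, transpose_apply, Perm.permMatrix_apply, Fin.ext_iff,
    val_finRotate, hmod]
  -- `n > 2` makes the two conditions `j = i + 1` and `i = j + 1` exclusive.
  split_ifs <;> first | omega | norm_num

/-- For the cycle graph `C_n` with `n > 2` odd and every `s ≠ 1`,
`Δ(s)` is positive definite. -/
theorem cycle_odd_defLap_posDef (n : ℕ) (hn : 2 < n) (hodd : Odd n) (s : ℝ)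
    (hs : s ≠ 1) : (defLap (cycAdj n) s).PosDef := by
  have hpow : s ^ n ≠ 1 := fun h => hs (hodd.strictMono_pow.injective (h.trans (one_pow n).symm))
  rw [cycAdj_eq_transpose_add_permMatrix hn, defLap_transpose_add_permMatrix]
  exact PosDef.conjTranspose_mul_self _
    (mulVec_injective_smul_one_sub_permMatrix (finRotate_pow_self hn.le) hpow)
end

section
/- Let K_{1,n} be the star graph with one center and n ≥ 3 leaves, and Δ(s) = s²(D − I) − sA + I its deformed Laplacian (an (n+1)×(n+1) matrix). Then Δ(s) is positive definite for every real s with |s| < 1, and for every real s with |s| > 1 there exists a vector v with vᵀΔ(s)v < 0 (so the system ẋ = −Δ(s)x is asymptotically stable for |s| < 1 and unstable for |s| > 1). -/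
open Matrix Filter

/-- Adjacency matrix of the star graph `K_{1,n}` on `Fin (n+1)`, with center `0`:
each leaf is adjacent exactly to the center. -/
noncomputable def starAdj (n : ℕ) : Matrix (Fin (n + 1)) (Fin (n + 1)) ℝ :=
  fun i j => if (i = 0 ∧ j ≠ 0) ∨ (j = 0 ∧ i ≠ 0) then 1 else 0

/-!
Splitting `v` into its center value `a = v 0` and leaf values `w j = v j.succ`, the quadratic
form of `Δ(s)` on the star is `(1 - s²) a² + ∑ⱼ (w j - s a)²`. For `|s| < 1` both terms are
nonnegative and vanish together only at `v = 0`; for `|s| > 1` the vector `a = 1`, `w j = s`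
kills the sum and leaves the negative value `1 - s²`.
-/

section

variable {V : Type} [Fintype V] [DecidableEq V]

theorem defLap_isHermitian {A : Matrix V V ℝ} (hA : A.IsHermitian) (s : ℝ) :
    (defLap A s).IsHermitian :=
  ((((isHermitian_diagonal _).sub isHermitian_one).smul (IsSelfAdjoint.all _)).sub
    (hA.smul (IsSelfAdjoint.all _))).add isHermitian_one

theorem dotProduct_defLap_mulVec (A : Matrix V V ℝ) (s : ℝ) (v : V → ℝ) :
    v ⬝ᵥ (defLap A s *ᵥ v) =
      ∑ i, (s ^ 2 * (∑ j, A i j - 1) + 1) * v i ^ 2 - s * (v ⬝ᵥ (A *ᵥ v)) := by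
  have diagonal_part : s ^ 2 * (v ⬝ᵥ (degMat A *ᵥ v) - v ⬝ᵥ v) + v ⬝ᵥ v =
      ∑ i, (s ^ 2 * (∑ j, A i j - 1) + 1) * v i ^ 2 := by
    simp only [degMat, dotProduct, mulVec_diagonal, ← Finset.sum_sub_distrib, Finset.mul_sum,
      ← Finset.sum_add_distrib]
    exact Finset.sum_congr rfl fun i _ => by ring
  rw [defLap, add_mulVec, sub_mulVec, smul_mulVec, smul_mulVec, sub_mulVec, one_mulVec,
    dotProduct_add, dotProduct_sub, dotProduct_smul, dotProduct_smul, dotProduct_sub,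
    smul_eq_mul, smul_eq_mul]
  linear_combination diagonal_part

end

section Star

variable (n : ℕ)

theorem starAdj_zero_zero : starAdj n 0 0 = 0 := by
  simp [starAdj]

theorem starAdj_zero_succ (j : Fin n) : starAdj n 0 j.succ = 1 := by
  simp [starAdj, Fin.succ_ne_zero]

theorem starAdj_succ_zero (i : Fin n) : starAdj n i.succ 0 = 1 := by
  simp [starAdj, Fin.succ_ne_zero]

theorem starAdj_succ_succ (i j : Fin n) : starAdj n i.succ j.succ = 0 := by
  simp [starAdj, Fin.succ_ne_zero]

theorem starAdj_isHermitian : (starAdj n).IsHermitian := by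
  ext i j
  simp only [starAdj, conjTranspose_apply, star_trivial, or_comm]

theorem sum_starAdj_zero : ∑ j, starAdj n 0 j = n := by
  simp [Fin.sum_univ_succ, starAdj_zero_zero, starAdj_zero_succ]

theorem sum_starAdj_succ (i : Fin n) : ∑ j, starAdj n i.succ j = 1 := by
  simp [Fin.sum_univ_succ, starAdj_succ_zero, starAdj_succ_succ]

theorem dotProduct_starAdj_mulVec (v : Fin (n + 1) → ℝ) :
    v ⬝ᵥ (starAdj n *ᵥ v) = 2 * v 0 * ∑ j : Fin n, v j.succ := by
  simp only [dotProduct, mulVec, Fin.sum_univ_succ, starAdj_zero_zero, starAdj_zero_succ,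
    starAdj_succ_zero, starAdj_succ_succ, zero_mul, one_mul, zero_add, add_zero,
    Finset.sum_const_zero, Finset.mul_sum, ← Finset.sum_add_distrib]
  exact Finset.sum_congr rfl fun i _ => by ring

theorem dotProduct_defLap_starAdj_mulVec (s : ℝ) (v : Fin (n + 1) → ℝ) :
    v ⬝ᵥ (defLap (starAdj n) s *ᵥ v) =
      (1 - s ^ 2) * v 0 ^ 2 + ∑ j : Fin n, (v j.succ - s * v 0) ^ 2 := by
  have leaf_squares : ∑ j : Fin n, (v j.succ - s * v 0) ^ 2 =
      ∑ j : Fin n, v j.succ ^ 2 - 2 * s * v 0 * ∑ j : Fin n, v j.succ + n * s ^ 2 * v 0 ^ 2 := by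
    simp only [sub_sq, Finset.sum_add_distrib, Finset.sum_sub_distrib, Finset.mul_sum,
      Finset.sum_const, Finset.card_univ, Fintype.card_fin, nsmul_eq_mul]
    exact congrArg₂ _ (congrArg₂ _ rfl (Finset.sum_congr rfl fun j _ => by ring)) (by ring)
  rw [dotProduct_defLap_mulVec, dotProduct_starAdj_mulVec, Fin.sum_univ_succ, sum_starAdj_zero,
    leaf_squares]
  simp only [sum_starAdj_succ, sub_self, mul_zero, zero_add, one_mul]
  ring

theorem defLap_starAdj_posDef {s : ℝ} (hs : |s| < 1) : (defLap (starAdj n) s).PosDef := by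
  refine posDef_iff_dotProduct_mulVec.mpr
    ⟨defLap_isHermitian (starAdj_isHermitian n) s, fun x hx => ?_⟩
  rw [star_trivial, dotProduct_defLap_starAdj_mulVec]
  have center_coeff : 0 < 1 - s ^ 2 := sub_pos.mpr ((sq_lt_one_iff_abs_lt_one s).mpr hs)
  have leaves_nonneg : 0 ≤ ∑ j : Fin n, (x j.succ - s * x 0) ^ 2 :=
    Finset.sum_nonneg fun j _ => sq_nonneg _
  by_contra! hle
  have center : x 0 = 0 := by
    by_contra h0
    linarith [mul_pos center_coeff (sq_pos_of_ne_zero h0)]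
  have leaves : ∀ j : Fin n, x j.succ = 0 := fun j => by
    have leaf_sum : ∑ k : Fin n, (x k.succ - s * x 0) ^ 2 = 0 :=
      le_antisymm (by linarith [mul_nonneg center_coeff.le (sq_nonneg (x 0))]) leaves_nonneg
    have hj := (Finset.sum_eq_zero_iff_of_nonneg fun k _ => sq_nonneg _).mp leaf_sum j
      (Finset.mem_univ j)
    simpa [center] using hj
  exact hx (funext (Fin.cases center leaves))

theorem exists_dotProduct_defLap_starAdj_mulVec_neg {s : ℝ} (hs : 1 < |s|) :
    ∃ v : Fin (n + 1) → ℝ, v ⬝ᵥ (defLap (starAdj n) s *ᵥ v) < 0 := by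
  refine ⟨Fin.cons 1 fun _ => s, ?_⟩
  rw [dotProduct_defLap_starAdj_mulVec]
  simpa using (one_lt_sq_iff_one_lt_abs s).mpr hs

end Star

theorem star_defLap_stability_general (n : ℕ) (s : ℝ) :
    (|s| < 1 → (defLap (starAdj n) s).PosDef) ∧
    (1 < |s| → ∃ v : Fin (n + 1) → ℝ, v ⬝ᵥ (defLap (starAdj n) s *ᵥ v) < 0) :=
  ⟨defLap_starAdj_posDef n, exists_dotProduct_defLap_starAdj_mulVec_neg n⟩

/-- For the star graph `K_{1,n}` (`n ≥ 3` leaves): `Δ(s)` is positive definite for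
`|s| < 1`, and for `|s| > 1` there is `v` with `vᵀ Δ(s) v < 0`. -/
theorem star_defLap_stability (n : ℕ) (hn : 3 ≤ n) (s : ℝ) :
    (|s| < 1 → (defLap (starAdj n) s).PosDef) ∧
    (1 < |s| → ∃ v : Fin (n + 1) → ℝ, v ⬝ᵥ (defLap (starAdj n) s *ᵥ v) < 0) :=
  star_defLap_stability_general n s
end
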